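/- Let T_{u,v} and T_{w,x} be infinitesimal Siegel transvections in o(V,B) whose corresponding isotropic planes ℓ = span(u,v) and m = span(w,x) satisfy ℓ ∩ m ≠ 0 and ℓ ≠ m. Then the Lie algebra generated by T_{u,v} and T_{w,x} is two-dimensional. -/

import Mathlib

/-!
Let `e ≠ 0` lie in both planes. Up to scalars, `T_{u,v} = T_{a,e}` and `T_{w,x} = T_{b,e}` with
`a` in the first plane and `b` in the second, so `e` is isotropic and orthogonal to `a` and `b`;
then both products `T_{a,e} T_{b,e}` and `T_{b,e} T_{a,e}` send `y` to `-B(e,y) B(a,b) e`, and the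
two transvections commute. By nondegeneracy the range of `T_{u,v}` is exactly `span {u, v}`, so
transvections of distinct planes are linearly independent. Two commuting independent elements span
an abelian, hence Lie-closed, subspace of dimension two.
-/

open Module Submodule

section

variable {F V : Type*} [Field F] [AddCommGroup V] [Module F V]

theorem finrank_span_pair {p q : V} (h : LinearIndependent F ![p, q]) :
    finrank F (span F ({p, q} : Set V)) = 2 := by
  rw [← Matrix.range_cons_cons_empty, finrank_span_eq_card h, Fintype.card_fin]

def siegelTransvection (B : LinearMap.BilinForm F V) (u v : V) : Module.End F V :=
  (B u).smulRight v - (B v).smulRight u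

variable (B : LinearMap.BilinForm F V)

@[simp]
theorem siegelTransvection_apply (u v y : V) :
    siegelTransvection B u v y = B u y • v - B v y • u :=
  rfl

theorem exists_apply_eq_one_apply_eq_zero [FiniteDimensional F V] (hB : B.Nondegenerate)
    {p q : V} (h : LinearIndependent F ![p, q]) : ∃ y : V, B p y = 1 ∧ B q y = 0 := by
  have hp : p ∉ span F {q} := by
    rw [mem_span_singleton]
    simpa using (linearIndependent_fin2.mp h).2
  obtain ⟨f, hfp, hf_span⟩ := (span F {q}).exists_dual_map_eq_bot_of_notMem hp inferInstance
  have hdual (g : Dual F V) (z : V) : B z ((B.flip.toDual hB.flip).symm g) = g z :=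
    B.flip.apply_toDual_symm_apply g z
  have hfq : f q = 0 := by simpa [Submodule.map_span] using hf_span
  exact ⟨(B.flip.toDual hB.flip).symm ((f p)⁻¹ • f), by simp [hdual, hfp],
    by simp [hdual, hfq]⟩

theorem siegelTransvection_swap (u v : V) :
    siegelTransvection B v u = -siegelTransvection B u v := by
  ext y
  simp

theorem siegelTransvection_smul_add (u v : V) (s t : F) :
    siegelTransvection B u (s • u + t • v) = t • siegelTransvection B u v := by
  ext y
  simp only [siegelTransvection_apply, LinearMap.smul_apply, LinearMap.add_apply, map_add,
    map_smul, smul_eq_mul]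
  module

theorem exists_siegelTransvection_eq_smul {u v e : V} (he : e ∈ span F {u, v}) (he0 : e ≠ 0) :
    ∃ a ∈ ({u, v} : Set V), ∃ c : F,
      siegelTransvection B u v = c • siegelTransvection B a e := by
  obtain ⟨s, t, rfl⟩ := mem_span_pair.mp he
  by_cases ht : t = 0
  · have hs : -s ≠ 0 := neg_ne_zero.mpr fun hs ↦ he0 (by simp [hs, ht])
    refine ⟨v, by simp, (-s)⁻¹, ?_⟩
    rw [add_comm, siegelTransvection_smul_add, siegelTransvection_swap B u v, smul_neg,
      ← neg_smul, inv_smul_smul₀ hs]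
  · refine ⟨u, by simp, t⁻¹, ?_⟩
    rw [siegelTransvection_smul_add, inv_smul_smul₀ ht]

theorem apply_eq_zero_of_mem_span_pair (hB : ∀ a b, B a b = B b a) {u v : V}
    (huu : B u u = 0) (huv : B u v = 0) (hvv : B v v = 0) {p q : V}
    (hp : p ∈ span F {u, v}) (hq : q ∈ span F {u, v}) : B p q = 0 := by
  obtain ⟨s, t, rfl⟩ := mem_span_pair.mp hp
  obtain ⟨s', t', rfl⟩ := mem_span_pair.mp hq
  simp [huu, huv, hvv, hB v u]

theorem commute_siegelTransvection_of_isotropic (hB : ∀ a b, B a b = B b a) {a b e : V}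
    (hee : B e e = 0) (hae : B a e = 0) (hbe : B b e = 0) :
    Commute (siegelTransvection B a e) (siegelTransvection B b e) := by
  ext y
  simp [hee, hae, hbe, hB e a, hB e b, hB b a, mul_comm]

theorem commute_siegelTransvection_of_inf_ne_bot (hB : ∀ a b, B a b = B b a) {u v w x : V}
    (huu : B u u = 0) (huv : B u v = 0) (hvv : B v v = 0)
    (hww : B w w = 0) (hwx : B w x = 0) (hxx : B x x = 0)
    (hmeet : span F {u, v} ⊓ span F {w, x} ≠ ⊥) :
    Commute (siegelTransvection B u v) (siegelTransvection B w x) := by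
  obtain ⟨e, ⟨hel, hem⟩, he0⟩ := exists_mem_ne_zero_of_ne_bot hmeet
  have hl {p q : V} : p ∈ span F {u, v} → q ∈ span F {u, v} → B p q = 0 :=
    apply_eq_zero_of_mem_span_pair B hB huu huv hvv
  have hm {p q : V} : p ∈ span F {w, x} → q ∈ span F {w, x} → B p q = 0 :=
    apply_eq_zero_of_mem_span_pair B hB hww hwx hxx
  obtain ⟨a, ha, c, hc⟩ := exists_siegelTransvection_eq_smul B hel he0
  obtain ⟨b, hb, d, hd⟩ := exists_siegelTransvection_eq_smul B hem he0
  rw [hc, hd]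
  exact ((commute_siegelTransvection_of_isotropic B hB (hl hel hel) (hl (subset_span ha) hel)
    (hm (subset_span hb) hem)).smul_left c).smul_right d

variable [FiniteDimensional F V]

theorem range_siegelTransvection (hB : B.Nondegenerate) {u v : V}
    (h : LinearIndependent F ![u, v]) :
    LinearMap.range (siegelTransvection B u v) = span F {u, v} := by
  refine le_antisymm ?_ (span_le.mpr ?_)
  · rintro _ ⟨y, rfl⟩
    exact mem_span_pair.mpr ⟨-B v y, B u y, by simp [neg_smul, sub_eq_neg_add]⟩
  · rintro _ (rfl | rfl)
    · obtain ⟨y, hvy, huy⟩ :=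
        exists_apply_eq_one_apply_eq_zero B hB (LinearIndependent.pair_symm_iff.mp h)
      exact ⟨-y, by simp [hvy, huy]⟩
    · obtain ⟨y, huy, hvy⟩ := exists_apply_eq_one_apply_eq_zero B hB h
      exact ⟨y, by simp [hvy, huy]⟩

theorem linearIndependent_siegelTransvection_pair (hB : B.Nondegenerate) {u v w x : V}
    (huv : LinearIndependent F ![u, v]) (hwx : LinearIndependent F ![w, x])
    (hne : span F {u, v} ≠ span F {w, x}) :
    LinearIndependent F ![siegelTransvection B u v, siegelTransvection B w x] := by
  have hne_zero : siegelTransvection B u v ≠ 0 := by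
    intro h0
    have := finrank_span_pair huv
    rw [← range_siegelTransvection B hB huv, h0, LinearMap.range_zero, finrank_bot] at this
    norm_num at this
  refine (LinearIndependent.pair_iff' hne_zero).mpr fun c hc ↦ hne (Eq.symm ?_)
  refine eq_of_le_of_finrank_eq ?_ (by rw [finrank_span_pair huv, finrank_span_pair hwx])
  rw [← range_siegelTransvection B hB huv, ← range_siegelTransvection B hB hwx, ← hc]
  exact LinearMap.range_smul_le_range _ c

end

theorem LieSubalgebra.finrank_lieSpan_pair {K L : Type*} [Field K] [LieRing L] [LieAlgebra K L]
    {x y : L} (hxy : ⁅x, y⁆ = 0) (h : LinearIndependent K ![x, y]) :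
    finrank K (lieSpan K L {x, y}) = 2 := by
  have hspan : (lieSpan K L {x, y} : Submodule K L) = span K {x, y} := by
    have hyx : ⁅y, x⁆ = 0 := by rw [← lie_skew, hxy, neg_zero]
    refine coe_lieSpan_eq_span_of_forall_lie_eq_zero ?_
    rintro _ (rfl | rfl) _ (rfl | rfl) <;> simp [hxy, hyx]
  change finrank K (lieSpan K L {x, y} : Submodule K L) = 2
  rw [hspan, finrank_span_pair h]

attribute [local instance 100] LieRing.ofAssociativeRing

theorem siegel_transvections_meeting_planes_general {F V : Type*} [Field F]
    [AddCommGroup V] [Module F V] [FiniteDimensional F V]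
    (B : LinearMap.BilinForm F V)
    (hBsymm : ∀ a b : V, B a b = B b a) (hBnd : B.Nondegenerate)
    (u v : V) (hind : LinearIndependent F ![u, v])
    (huu : B u u = 0) (huv : B u v = 0) (hvv : B v v = 0)
    (w x : V) (hind' : LinearIndependent F ![w, x])
    (hww : B w w = 0) (hwx : B w x = 0) (hxx : B x x = 0)
    (hmeet : (Submodule.span F {u, v} : Submodule F V) ⊓ Submodule.span F {w, x} ≠ ⊥)
    (hne : (Submodule.span F {u, v} : Submodule F V) ≠ Submodule.span F {w, x}) :
    Module.finrank F
      (LieSubalgebra.lieSpan F (Module.End F V)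
        {(B u).smulRight v - (B v).smulRight u,
         (B w).smulRight x - (B x).smulRight w}) = 2 :=
  LieSubalgebra.finrank_lieSpan_pair
    (commute_siegelTransvection_of_inf_ne_bot B hBsymm huu huv hvv hww hwx hxx hmeet).lie_eq
    (linearIndependent_siegelTransvection_pair B hBnd hind hind' hne)

/-- two infinitesimal Siegel transvections whose isotropic planes meet
in a point (nonzero intersection, distinct planes) generate a two-dimensional Lie
algebra. -/
theorem siegel_transvections_meeting_planes {F V : Type*} [Field F]
    [AddCommGroup V] [Module F V] [FiniteDimensional F V]
    (h2 : (2 : F) ≠ 0) (B : LinearMap.BilinForm F V)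
    (hBsymm : ∀ a b : V, B a b = B b a) (hBnd : B.Nondegenerate)
    (u v : V) (hind : LinearIndependent F ![u, v])
    (huu : B u u = 0) (huv : B u v = 0) (hvv : B v v = 0)
    (w x : V) (hind' : LinearIndependent F ![w, x])
    (hww : B w w = 0) (hwx : B w x = 0) (hxx : B x x = 0)
    (hmeet : (Submodule.span F {u, v} : Submodule F V) ⊓ Submodule.span F {w, x} ≠ ⊥)
    (hne : (Submodule.span F {u, v} : Submodule F V) ≠ Submodule.span F {w, x}) :
    Module.finrank F
      (LieSubalgebra.lieSpan F (Module.End F V)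
        {(B u).smulRight v - (B v).smulRight u,
         (B w).smulRight x - (B x).smulRight w}) = 2 :=
  siegel_transvections_meeting_planes_general B hBsymm hBnd u v hind huu huv hvv w x hind' hww hwx
    hxx hmeet hne
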